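/- Let G be a finite simple graph, let f be a γ_R-function on G, and let V_i = {v ∈ V(G) : f(v) = i} for i ∈ {0,1,2}. Then no vertex in V_1 is adjacent to a vertex in V_2. -/

import Mathlib

open SimpleGraph

/-- The closed neighbourhood `N[v]` of a vertex `v`: `v` together with its neighbours. -/
def closedNbhd {V : Type*} (G : SimpleGraph V) (v : V) : Set V :=
  insert v (G.neighborSet v)

/-- A Roman dominating function on `G`: a map into `{0,1,2}` such that every vertex with
value `0` has a neighbour with value `2`. -/
def IsRomanDominating {V : Type*} (G : SimpleGraph V) (f : V → ℕ) : Prop :=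
  (∀ v, f v ≤ 2) ∧ ∀ v, f v = 0 → ∃ u, G.Adj v u ∧ f u = 2

/-- The Roman domination number `γ_R(G)`: the minimum weight of a Roman dominating
function on `G`. -/
noncomputable def romanNumber {V : Type*} [Fintype V] (G : SimpleGraph V) : ℕ :=
  sInf {w | ∃ f : V → ℕ, IsRomanDominating G f ∧ ∑ v, f v = w}

/-- A two-neighbour packing of `G`: a set of vertices such that every closed
neighbourhood contains at most two of its members. -/
def IsTwoNbrPacking {V : Type*} (G : SimpleGraph V) (A : Set V) : Prop :=
  ∀ v, (closedNbhd G v ∩ A).ncard ≤ 2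

/-- The two-neighbour packing number `γ̄_R(G)`: the maximum size of a two-neighbour
packing of `G`. -/
noncomputable def tnpNumber {V : Type*} [Fintype V] (G : SimpleGraph V) : ℕ :=
  sSup {n | ∃ A : Set V, IsTwoNbrPacking G A ∧ A.ncard = n}


/- A γ_R-function cannot give 1 to a neighbour of a vertex of value 2: lowering that value to 0
keeps the function Roman dominating and decreases its weight. -/

theorem romanNumber_le_sum {V : Type*} [Fintype V] {G : SimpleGraph V} {f : V → ℕ}
    (hf : IsRomanDominating G f) : romanNumber G ≤ ∑ v, f v :=
  Nat.sInf_le ⟨f, hf, rfl⟩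

theorem sum_update_zero_add {V M : Type*} [Fintype V] [DecidableEq V] [AddCommMonoid M]
    (f : V → M) (u : V) :
    ∑ v, Function.update f u 0 v + f u = ∑ v, f v := by
  rw [Finset.sum_update_of_mem (Finset.mem_univ u), zero_add,
    ← Finset.sum_eq_sum_sdiff_singleton_add (Finset.mem_univ u) f]

theorem IsRomanDominating.update_zero {V : Type*} [DecidableEq V] {G : SimpleGraph V}
    {f : V → ℕ} (hf : IsRomanDominating G f) {u w : V} (hu : f u ≠ 2) (huw : G.Adj u w)
    (hw : f w = 2) : IsRomanDominating G (Function.update f u 0) := by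
  refine ⟨fun v => ?_, fun v hv => ?_⟩
  · rcases eq_or_ne v u with rfl | hvu
    · simp
    · simpa [hvu] using hf.1 v
  · have hwu : w ≠ u := by rintro rfl; exact hu hw
    rcases eq_or_ne v u with rfl | hvu
    · exact ⟨w, huw, by simpa [hwu] using hw⟩
    · obtain ⟨x, hvx, hx⟩ := hf.2 v (by simpa [hvu] using hv)
      have hxu : x ≠ u := by rintro rfl; exact hu hx
      exact ⟨x, hvx, by simpa [hxu] using hx⟩

theorem no_edge_V1_V2 {V : Type*} [Fintype V] (G : SimpleGraph V)
    (f : V → ℕ) (hf : IsRomanDominating G f) (hmin : ∑ v, f v = romanNumber G) :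
    ∀ u v : V, f u = 1 → f v = 2 → ¬ G.Adj u v := by
  classical
  intro u v hu hv huv
  have hle := romanNumber_le_sum (hf.update_zero (by omega) huv hv)
  have hsum := sum_update_zero_add f u
  omega
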